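/- arXiv:2602.21062 — 3 statements merged into one kernel-verified Lean document; each statement's English description precedes it below -/
import Mathlib

section
/- Under the stated data (thresholds and transfer property), if max(λMA, λMB) ≤ min(λNA, λNB), then λMA = λMB, and hence λMA = λMB ≤ min(λNA, λNB). (Corollary 4.3, item (1).) -/
/-- `λ₀` is a threshold for the family of extinction probability vectors `q`:
below `λ₀` extinction is almost sure (the vector is constantly `1`),
above `λ₀` there is survival with positive probability from every site. -/
def IsThreshold {X : Type*} (q : ℝ → X → ℝ) (lam₀ : ℝ) : Prop :=
  (∀ lam : ℝ, lam < lam₀ → q lam = fun _ => 1) ∧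
  (∀ lam : ℝ, lam₀ < lam → ∀ x, q lam x < 1)

namespace IsThreshold

variable {X : Type*} {qA qB : ℝ → X → ℝ} {lA lB lam : ℝ}

theorem apply_eq_apply (htA : IsThreshold qA lA) (htB : IsThreshold qB lB)
    (hA : lam < lA) (hB : lam < lB) : qA lam = qB lam := by
  rw [htA.1 lam hA, htB.1 lam hB]

theorem apply_lt_apply [Nonempty X] (htA : IsThreshold qA lA) (htB : IsThreshold qB lB)
    (hA : lA < lam) (hB : lam < lB) : qA lam < qB lam := by
  have hlt : ∀ x, qA lam x < qB lam x := fun x => by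
    rw [htB.1 lam hB]
    exact htA.2 lam hA x
  exact Pi.lt_def.mpr ⟨fun x => (hlt x).le, Classical.arbitrary X, hlt _⟩

/-- Strictly between `lA` and `lB` the first pair is strictly ordered, while below both
`lNA` and `lNB` the second pair is constantly `1`. -/
theorem le_of_transfer_lt [Nonempty X] {qNA qNB : ℝ → X → ℝ} {lNA lNB : ℝ}
    (htA : IsThreshold qA lA) (htB : IsThreshold qB lB)
    (htNA : IsThreshold qNA lNA) (htNB : IsThreshold qNB lNB) (hA : 0 < lA)
    (transfer : ∀ lam : ℝ, 0 < lam → qA lam < qB lam → qNA lam < qNB lam)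
    (hBNA : lB ≤ lNA) (hBNB : lB ≤ lNB) : lB ≤ lA := by
  by_contra! hAB
  obtain ⟨lam, hAlam, hlamB⟩ := exists_between hAB
  have hN : qNA lam < qNB lam :=
    transfer lam (hA.trans hAlam) (htA.apply_lt_apply htB hAlam hlamB)
  exact hN.ne (htNA.apply_eq_apply htNB (hlamB.trans_le hBNA) (hlamB.trans_le hBNB))

end IsThreshold

theorem cor43_item1_general
    {X : Type*} [Nonempty X]
    (qMA qMB qNA qNB : ℝ → X → ℝ)
    (lMA lMB lNA lNB : ℝ)
    (hMA : 0 < lMA) (hMB : 0 < lMB)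
    (htMA : IsThreshold qMA lMA) (htMB : IsThreshold qMB lMB)
    (htNA : IsThreshold qNA lNA) (htNB : IsThreshold qNB lNB)
    (transfer : ∀ lam : ℝ, 0 < lam →
      (qMA lam = qMB lam ↔ qNA lam = qNB lam) ∧
      (qMA lam < qMB lam ↔ qNA lam < qNB lam) ∧
      (qMB lam < qMA lam ↔ qNB lam < qNA lam)) :
    (max lMA lMB ≤ min lNA lNB → lMA = lMB ∧ lMA ≤ min lNA lNB) := by
  intro hmax
  obtain ⟨hMAN, hMBN⟩ := max_le_iff.mp hmax
  obtain ⟨hMANA, hMANB⟩ := le_min_iff.mp hMAN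
  obtain ⟨hMBNA, hMBNB⟩ := le_min_iff.mp hMBN
  have hBA : lMB ≤ lMA := htMA.le_of_transfer_lt htMB htNA htNB hMA
    (fun lam hlam => (transfer lam hlam).2.1.mp) hMBNA hMBNB
  have hAB : lMA ≤ lMB := htMB.le_of_transfer_lt htMA htNB htNA hMB
    (fun lam hlam => (transfer lam hlam).2.2.mp) hMANB hMANA
  exact ⟨le_antisymm hAB hBA, hMAN⟩

theorem cor43_item1
    {X : Type*} [Nonempty X]
    (qMA qMB qNA qNB : ℝ → X → ℝ)
    (lMA lMB lNA lNB : ℝ)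
    (hMA : 0 < lMA) (hMB : 0 < lMB) (hNA : 0 < lNA) (hNB : 0 < lNB)
    (htMA : IsThreshold qMA lMA) (htMB : IsThreshold qMB lMB)
    (htNA : IsThreshold qNA lNA) (htNB : IsThreshold qNB lNB)
    (transfer : ∀ lam : ℝ, 0 < lam →
      (qMA lam = qMB lam ↔ qNA lam = qNB lam) ∧
      (qMA lam < qMB lam ↔ qNA lam < qNB lam) ∧
      (qMB lam < qMA lam ↔ qNB lam < qNA lam)) :
    (max lMA lMB ≤ min lNA lNB → lMA = lMB ∧ lMA ≤ min lNA lNB) :=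
  cor43_item1_general qMA qMB qNA qNB lMA lMB lNA lNB hMA hMB htMA htMB htNA htNB transfer
end

section
/- Under the stated data (thresholds and transfer property), either min(λNA, λNB) ≤ min(λMA, λMB) or λMA = λMB. (Corollary 4.4, item (1).) -/
namespace IsThreshold

variable {X : Type*} {qA qB qC qD : ℝ → X → ℝ} {lA lB lC lD lam : ℝ}

theorem lt_of_lt_of_lt [Nonempty X] (hA : IsThreshold qA lA) (hB : IsThreshold qB lB)
    (hAlam : lA < lam) (hlamB : lam < lB) : qA lam < qB lam := by
  have hsurv : ∀ x, qA lam x < 1 := hA.2 lam hAlam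
  rw [hB.1 lam hlamB, Pi.lt_def]
  exact ⟨fun x => (hsurv x).le, Classical.arbitrary X, hsurv _⟩

theorem min_le_of_transfer_lt [Nonempty X] (hA : IsThreshold qA lA) (hB : IsThreshold qB lB)
    (hC : IsThreshold qC lC) (hD : IsThreshold qD lD) (hApos : 0 < lA) (hAB : lA < lB)
    (transfer : ∀ lam, 0 < lam → qA lam < qB lam → qC lam < qD lam) :
    min lC lD ≤ lA := by
  by_contra! hCD
  obtain ⟨lam, hAlam, hlam⟩ := exists_between (lt_min hAB hCD)
  have hlamC : lam < lC := hlam.trans_le ((min_le_right _ _).trans (min_le_left _ _))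
  have hlamD : lam < lD := hlam.trans_le ((min_le_right _ _).trans (min_le_right _ _))
  have hCD_lt : qC lam < qD lam :=
    transfer lam (hApos.trans hAlam) (hA.lt_of_lt_of_lt hB hAlam (hlam.trans_le (min_le_left _ _)))
  rw [hC.1 lam hlamC, hD.1 lam hlamD] at hCD_lt
  exact lt_irrefl _ hCD_lt

end IsThreshold

theorem cor44_item1_general
    {X : Type*} [Nonempty X]
    (qMA qMB qNA qNB : ℝ → X → ℝ)
    (lMA lMB lNA lNB : ℝ)
    (hMA : 0 < lMA) (hMB : 0 < lMB)
    (htMA : IsThreshold qMA lMA) (htMB : IsThreshold qMB lMB)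
    (htNA : IsThreshold qNA lNA) (htNB : IsThreshold qNB lNB)
    (transfer : ∀ lam : ℝ, 0 < lam →
      (qMA lam = qMB lam ↔ qNA lam = qNB lam) ∧
      (qMA lam < qMB lam ↔ qNA lam < qNB lam) ∧
      (qMB lam < qMA lam ↔ qNB lam < qNA lam)) :
    (min lNA lNB ≤ min lMA lMB ∨ lMA = lMB) := by
  rcases lt_trichotomy lMA lMB with hlt | heq | hgt
  · left
    rw [min_eq_left hlt.le]
    exact htMA.min_le_of_transfer_lt htMB htNA htNB hMA hlt
      fun lam hlam => (transfer lam hlam).2.1.mp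
  · exact Or.inr heq
  · left
    rw [min_eq_right hgt.le, min_comm]
    exact htMB.min_le_of_transfer_lt htMA htNB htNA hMB hgt
      fun lam hlam => (transfer lam hlam).2.2.mp

theorem cor44_item1
    {X : Type*} [Nonempty X]
    (qMA qMB qNA qNB : ℝ → X → ℝ)
    (lMA lMB lNA lNB : ℝ)
    (hMA : 0 < lMA) (hMB : 0 < lMB) (hNA : 0 < lNA) (hNB : 0 < lNB)
    (htMA : IsThreshold qMA lMA) (htMB : IsThreshold qMB lMB)
    (htNA : IsThreshold qNA lNA) (htNB : IsThreshold qNB lNB)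
    (transfer : ∀ lam : ℝ, 0 < lam →
      (qMA lam = qMB lam ↔ qNA lam = qNB lam) ∧
      (qMA lam < qMB lam ↔ qNA lam < qNB lam) ∧
      (qMB lam < qMA lam ↔ qNB lam < qNA lam)) :
    (min lNA lNB ≤ min lMA lMB ∨ lMA = lMB) :=
  cor44_item1_general qMA qMB qNA qNB lMA lMB lNA lNB hMA hMB htMA htMB htNA htNB transfer
end

section
/- Under the stated data, it is impossible that simultaneously: λMw < λMs (M has a pure global survival phase), λNw = λNs (N has no pure global survival phase), and N has no nonstrong local survival phase. In other words, an irreducible GMBRW with a pure global survival phase and an irreducible GMBRW with neither a pure global survival phase nor a nonstrong local survival phase cannot satisfy the transfer property, hence cannot lie in the same finite-modification equivalence class. (Corollary 5.12, item (1).) -/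
/-- Sharp threshold: extinction is almost sure also at `λ₀` itself. -/
def IsSharpThreshold {X : Type*} (q : ℝ → X → ℝ) (lam₀ : ℝ) : Prop :=
  (∀ lam : ℝ, lam ≤ lam₀ → q lam = fun _ => 1) ∧
  (∀ lam : ℝ, lam₀ < lam → ∀ x, q lam x < 1)

/-- The process with global extinction vectors `qX` and local extinction
vectors `qC` has a nonstrong local survival phase. -/
def HasNonstrongLocalPhase {X : Type*} (qX qC : ℝ → X → ℝ) : Prop :=
  ∃ lam : ℝ, 0 < lam ∧ qX lam < qC lam ∧ ∀ x, qC lam x < 1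

/-! Between the global and the local threshold the global extinction vector is strictly
below the (identically one) local one, and below both thresholds the two coincide. Transfer
carries the strict inequality from `M` to `N` at any parameter inside the pure global survival
phase of `M`; choosing that parameter different from `λNs = λNw`, it lies either below `λNs`,
where `N` has equal vectors, or above it, where the strict inequality is a nonstrong local
survival phase of `N`. -/

section Thresholds

variable {X : Type*} {qX qC : ℝ → X → ℝ} {lw ls lam : ℝ}

theorem IsThreshold.lt_of_isSharpThreshold [Nonempty X] (hX : IsThreshold qX lw)
    (hC : IsSharpThreshold qC ls) (hw : lw < lam) (hs : lam ≤ ls) : qX lam < qC lam := by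
  rw [hC.1 lam hs]
  exact Pi.lt_def.2 ⟨fun x => (hX.2 lam hw x).le, Classical.arbitrary X, hX.2 lam hw _⟩

theorem IsThreshold.eq_of_isSharpThreshold (hX : IsThreshold qX lw)
    (hC : IsSharpThreshold qC ls) (hw : lam < lw) (hs : lam ≤ ls) : qX lam = qC lam := by
  rw [hX.1 lam hw, hC.1 lam hs]

end Thresholds

theorem cor512_item1_general
    {X : Type*} [Nonempty X]
    (qMX qMC qNX qNC : ℝ → X → ℝ)
    (lMw lMs lNw lNs : ℝ)
    (hMw : 0 < lMw)
    (htMw : IsThreshold qMX lMw) (htNw : IsThreshold qNX lNw)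
    (htMs : IsSharpThreshold qMC lMs) (htNs : IsSharpThreshold qNC lNs)
    (transfer : ∀ lam : ℝ, 0 < lam →
      (qMX lam = qMC lam ↔ qNX lam = qNC lam) ∧
      (qMX lam < qMC lam ↔ qNX lam < qNC lam) ∧
      (qMC lam < qMX lam ↔ qNC lam < qNX lam)) :
    ¬ (lMw < lMs ∧ lNw = lNs ∧ ¬ HasNonstrongLocalPhase qNX qNC) := by
  rintro ⟨hMpure, hNw_eq, hNno⟩
  obtain ⟨lam, ⟨hMw_lt, hlt_Ms⟩, hne⟩ := (Set.Ioo_infinite hMpure).nontrivial.exists_ne lNs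
  have hpos : 0 < lam := hMw.trans hMw_lt
  have hNlt : qNX lam < qNC lam :=
    (transfer lam hpos).2.1.mp (htMw.lt_of_isSharpThreshold htMs hMw_lt hlt_Ms.le)
  rcases hne.lt_or_gt with hbelow | habove
  · exact hNlt.ne (htNw.eq_of_isSharpThreshold htNs (hNw_eq ▸ hbelow) hbelow.le)
  · exact hNno ⟨lam, hpos, hNlt, htNs.2 lam habove⟩

theorem cor512_item1
    {X : Type*} [Nonempty X]
    (qMX qMC qNX qNC : ℝ → X → ℝ)
    (lMw lMs lNw lNs : ℝ)
    (hMw : 0 < lMw) (hMs : 0 < lMs) (hNw : 0 < lNw) (hNs : 0 < lNs)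
    (htMw : IsThreshold qMX lMw) (htNw : IsThreshold qNX lNw)
    (htMs : IsSharpThreshold qMC lMs) (htNs : IsSharpThreshold qNC lNs)
    (hM : lMw ≤ lMs) (hN : lNw ≤ lNs)
    (transfer : ∀ lam : ℝ, 0 < lam →
      (qMX lam = qMC lam ↔ qNX lam = qNC lam) ∧
      (qMX lam < qMC lam ↔ qNX lam < qNC lam) ∧
      (qMC lam < qMX lam ↔ qNC lam < qNX lam)) :
    ¬ (lMw < lMs ∧ lNw = lNs ∧ ¬ HasNonstrongLocalPhase qNX qNC) :=
  cor512_item1_general qMX qMC qNX qNC lMw lMs lNw lNs hMw htMw htNw htMs htNs transfer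
end
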